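/- Let R : Π → ℝ and R̂ : Π → ℝ be functions on a policy class Π such that |R(π) − R̂(π)| ≤ f(π) for all π ∈ Π, where f : Π → ℝ₊. Define π̂ ∈ argmin_{π∈Π} (R̂(π) + f(π)) and π* ∈ argmin_{π∈Π} R(π). Then the suboptimality gap satisfies R(π̂) − R(π*) ≤ 2f(π*). -/
import Mathlib


/-- Generic pessimism suboptimality: if `|R − R̂| ≤ f` on `Π`, `π̂` minimizes `R̂ + f`,
and `π*` minimizes `R`, then `R(π̂) − R(π*) ≤ 2 f(π*)`. -/
theorem pessimism_suboptimality {P : Type*} [Nonempty P]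
    (R Rhat f : P → ℝ) (hf : ∀ p, 0 ≤ f p)
    (hbound : ∀ p, |R p - Rhat p| ≤ f p)
    (πhat πstar : P)
    (hπhat : ∀ p, Rhat πhat + f πhat ≤ Rhat p + f p)
    (hπstar : ∀ p, R πstar ≤ R p) :
    R πhat - R πstar ≤ 2 * f πstar := by
  have h1 := abs_le.mp (hbound πhat)
  have h2 := abs_le.mp (hbound πstar)
  have h3 := hπhat πstar
  linarith
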